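/- arXiv:1003.2589 — 2 statements merged into one kernel-verified Lean document; each statement's English description precedes it below -/
import Mathlib

section
/- The trigonometric identity (sin(7π/30) + sin(13π/30) + sin(17π/30) + sin(23π/30))² + (sin(π/30) + sin(11π/30) + sin(19π/30) + sin(29π/30))² = 15 holds. -/
open Real

theorem stmt_6 :
    (Real.sin (7 * Real.pi / 30) + Real.sin (13 * Real.pi / 30) +
        Real.sin (17 * Real.pi / 30) + Real.sin (23 * Real.pi / 30)) ^ 2 +
      (Real.sin (Real.pi / 30) + Real.sin (11 * Real.pi / 30) +
        Real.sin (19 * Real.pi / 30) + Real.sin (29 * Real.pi / 30)) ^ 2 = 15 := by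
  have h23 : Real.sin (23 * Real.pi / 30) = Real.sin (7 * Real.pi / 30) := by
    rw [show (23 * Real.pi / 30) = Real.pi - 7 * Real.pi / 30 by ring, Real.sin_pi_sub]
  have h17 : Real.sin (17 * Real.pi / 30) = Real.sin (13 * Real.pi / 30) := by
    rw [show (17 * Real.pi / 30) = Real.pi - 13 * Real.pi / 30 by ring, Real.sin_pi_sub]
  have h29 : Real.sin (29 * Real.pi / 30) = Real.sin (Real.pi / 30) := by
    rw [show (29 * Real.pi / 30) = Real.pi - Real.pi / 30 by ring, Real.sin_pi_sub]
  have h19 : Real.sin (19 * Real.pi / 30) = Real.sin (11 * Real.pi / 30) := by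
    rw [show (19 * Real.pi / 30) = Real.pi - 11 * Real.pi / 30 by ring, Real.sin_pi_sub]
  have hA : Real.sin (7 * Real.pi / 30) + Real.sin (13 * Real.pi / 30) =
      2 * Real.sin (Real.pi / 3) * Real.cos (Real.pi / 10) := by
    rw [show (7 * Real.pi / 30) = Real.pi / 3 - Real.pi / 10 by ring,
      show (13 * Real.pi / 30) = Real.pi / 3 + Real.pi / 10 by ring,
      Real.sin_sub, Real.sin_add]; ring
  have hB : Real.sin (Real.pi / 30) + Real.sin (11 * Real.pi / 30) =
      2 * Real.sin (Real.pi / 5) * Real.cos (Real.pi / 6) := by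
    rw [show (Real.pi / 30) = Real.pi / 5 - Real.pi / 6 by ring,
      show (11 * Real.pi / 30) = Real.pi / 5 + Real.pi / 6 by ring,
      Real.sin_sub, Real.sin_add]; ring
  have hs3 : Real.sin (Real.pi / 3) = Real.sqrt 3 / 2 := Real.sin_pi_div_three
  have hc6 : Real.cos (Real.pi / 6) = Real.sqrt 3 / 2 := Real.cos_pi_div_six
  have hc5 : Real.cos (Real.pi / 5) = (1 + Real.sqrt 5) / 4 := Real.cos_pi_div_five
  have hcsq : Real.cos (Real.pi / 10) ^ 2 = (1 + Real.cos (Real.pi / 5)) / 2 := by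
    have := Real.cos_sq (Real.pi / 10)
    rw [show 2 * (Real.pi / 10) = Real.pi / 5 by ring] at this
    rw [this]; ring
  have hssq : Real.sin (Real.pi / 5) ^ 2 = 1 - Real.cos (Real.pi / 5) ^ 2 := by
    have := Real.sin_sq_add_cos_sq (Real.pi / 5); linarith
  have h3 : Real.sqrt 3 ^ 2 = 3 := Real.sq_sqrt (by norm_num)
  have h5 : Real.sqrt 5 ^ 2 = 5 := Real.sq_sqrt (by norm_num)
  rw [h23, h17, h29, h19]
  have e1 : (Real.sin (7 * Real.pi / 30) + Real.sin (13 * Real.pi / 30) +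
      Real.sin (13 * Real.pi / 30) + Real.sin (7 * Real.pi / 30)) ^ 2 =
      4 * (Real.sin (7 * Real.pi / 30) + Real.sin (13 * Real.pi / 30)) ^ 2 := by ring
  have e2 : (Real.sin (Real.pi / 30) + Real.sin (11 * Real.pi / 30) +
      Real.sin (11 * Real.pi / 30) + Real.sin (Real.pi / 30)) ^ 2 =
      4 * (Real.sin (Real.pi / 30) + Real.sin (11 * Real.pi / 30)) ^ 2 := by ring
  rw [e1, e2, hA, hB, hs3, hc6]
  nlinarith [hcsq, hssq, hc5, h3, h5]
end

section
/- With q = exp(iπ/30), the sum [1]_q + [11]_q + [19]_q + [29]_q equals ½(3(5+√5) + √(150+66√5)), where [n]_q = sin(nπ/30)/sin(π/30). -/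
open Real

/-!
By `sin (π - x) = sin x` the sum is `2 + 2 sin (11π/30) / sin (π/30)`. Writing `π/30` and `11π/30`
as `π/5 ∓ π/6` expresses both sines through `sin (π/5)`, `√3` and `√5`, and the radical
`√(150 + 66√5)` is exactly `4√3 (2 + √5) sin (π/5)`, so the identity becomes polynomial
arithmetic modulo `(√3)² = 3`, `(√5)² = 5` and `sin² (π/5) = (5 - √5)/8`.
-/

namespace Real

lemma sin_mul_pi_div_eq_of_add_eq {m n N : ℝ} (h : m + n = N) :
    sin (m * π / N) = sin (n * π / N) := by
  rcases eq_or_ne N 0 with rfl | hN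
  · simp
  subst h
  rw [← sin_pi_sub]
  congr 1
  field_simp
  ring

lemma sin_sq_pi_div_five : sin (π / 5) ^ 2 = (5 - √5) / 8 := by
  have h5 : √5 ^ 2 = 5 := sq_sqrt (by norm_num)
  have h := sin_sq_add_cos_sq (π / 5)
  rw [cos_pi_div_five] at h
  linear_combination h - h5 / 16

lemma sin_pi_div_thirty : sin (π / 30) = √3 / 2 * sin (π / 5) - (1 + √5) / 8 := by
  rw [show π / 30 = π / 5 - π / 6 by ring, sin_sub, cos_pi_div_six, sin_pi_div_six,
    cos_pi_div_five]
  ring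

lemma sin_eleven_mul_pi_div_thirty :
    sin (11 * π / 30) = √3 / 2 * sin (π / 5) + (1 + √5) / 8 := by
  rw [show 11 * π / 30 = π / 5 + π / 6 by ring, sin_add, cos_pi_div_six, sin_pi_div_six,
    cos_pi_div_five]
  ring

lemma sqrt_150_add_66_mul_sqrt_five : √(150 + 66 * √5) = 4 * √3 * (2 + √5) * sin (π / 5) := by
  have h3 : √3 ^ 2 = 3 := sq_sqrt (by norm_num)
  have h5 : √5 ^ 2 = 5 := sq_sqrt (by norm_num)
  have hsin : 0 < sin (π / 5) := sin_pos_of_pos_of_lt_pi (by positivity) (by linarith [pi_pos])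
  rw [sqrt_eq_iff_mul_self_eq_of_pos (by positivity)]
  linear_combination (16 * (2 + √5) ^ 2 * sin (π / 5) ^ 2) * h3
    + 48 * (2 + √5) ^ 2 * sin_sq_pi_div_five + 6 * (1 - √5) * h5

end Real

theorem stmt_12 (qd : ℕ → ℝ)
    (hqd : ∀ n, qd n = Real.sin (n * Real.pi / 30) / Real.sin (Real.pi / 30)) :
    qd 1 + qd 11 + qd 19 + qd 29
      = (1 / 2) * (3 * (5 + Real.sqrt 5) + Real.sqrt (150 + 66 * Real.sqrt 5)) := by
  have hs : sin (π / 30) ≠ 0 :=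
    (sin_pos_of_pos_of_lt_pi (by positivity) (by linarith [pi_pos])).ne'
  have h29 : sin (29 * π / 30) = sin (1 * π / 30) :=
    sin_mul_pi_div_eq_of_add_eq (by norm_num)
  have h19 : sin (19 * π / 30) = sin (11 * π / 30) :=
    sin_mul_pi_div_eq_of_add_eq (by norm_num)
  simp only [hqd, Nat.cast_ofNat, Nat.cast_one, h29, h19, one_mul]
  rw [sqrt_150_add_66_mul_sqrt_five, ← add_div, ← add_div, ← add_div, div_eq_iff hs,
    sin_pi_div_thirty, sin_eleven_mul_pi_div_thirty]
  have h3 : √3 ^ 2 = 3 := sq_sqrt (by norm_num)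
  have h5 : √5 ^ 2 = 5 := sq_sqrt (by norm_num)
  linear_combination (√3 * sin (π / 5) / 4 + 9 / 16) * h5 - (2 + √5) * sin (π / 5) ^ 2 * h3
    - 3 * (2 + √5) * sin_sq_pi_div_five
end
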